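/- arXiv:0801.0120 — 2 statements merged into one kernel-verified Lean document; each statement's English description precedes it below -/
import Mathlib

section
/- If A = (1, a_1, …, a_k) is an orderly currency, then a_i − a_{i−1} ≥ a_1 − 1 for all i = 1, …, k. -/
/-- The largest coin of the currency with coins `a 0, …, a k` that is `≤ c`
(or `0` if there is none). -/
def bestCoin (a : ℕ → ℕ) (k : ℕ) (c : ℕ) : ℕ :=
  ((Finset.range (k + 1)).filter fun j => a j ≤ c).sup a

/-- The number of coins used by the greedy algorithm to pay the amount `c`,
using the currency with coins `a 0, …, a k`. -/
def grd (a : ℕ → ℕ) (k : ℕ) : ℕ → ℕ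
  | 0 => 0
  | c + 1 =>
    if h : 1 ≤ bestCoin a k (c + 1) then
      grd a k (c + 1 - bestCoin a k (c + 1)) + 1
    else 0
  decreasing_by omega

/-- The minimal number of coins needed to pay the amount `c`,
using the currency with coins `a 0, …, a k`. -/
noncomputable def opt (a : ℕ → ℕ) (k : ℕ) (c : ℕ) : ℕ :=
  sInf {n | ∃ x : Fin (k + 1) → ℕ, (∑ i, x i) = n ∧ (∑ i, x i * a i.1) = c}

/-- `a 0, …, a k` is a currency: it starts with the coin `1` and is strictly increasing. -/
def IsCurrency (a : ℕ → ℕ) (k : ℕ) : Prop :=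
  a 0 = 1 ∧ ∀ i j : ℕ, i < j → j ≤ k → a i < a j

/-- The currency with coins `a 0, …, a k` is orderly: the greedy payment is
optimal for every positive amount. -/
def Orderly (a : ℕ → ℕ) (k : ℕ) : Prop :=
  ∀ c : ℕ, 0 < c → opt a k c = grd a k c

/-- The set `𝒜(a) = ⋃_{m ≥ 1} {m·a − l : 0 ≤ l ≤ m}`. -/
def calA (a : ℕ) : Set ℕ :=
  {x | ∃ m l : ℕ, 1 ≤ m ∧ l ≤ m ∧ x = m * a - l}

/-! Say that a coin `x ≥ 2` is *short* if `opt (x - 1) < a 1 - 1`. For an orderly currency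
`opt (a i - 1) = a i - a (i - 1)` whenever that gap is at most `a 1`, so a gap below `a 1 - 1`
produces a short coin. Take a short coin `V = W + 1` minimising `opt W`, and the least one among
those. Then no coin `z ∈ [2, W]` has `opt (z - 1) ≤ opt W`, and greedy steps at `x + W` and
`x + W + 1 = x + V` show that any coin `x` followed by another coin in `(x, x + W]` has `x + W`
or `x + W + 1` as a coin. Applied to the largest coin `Q` followed by a coin in `(Q, Q + W)`,
this pins down `Q + 1` as the next coin, with no coin in `(Q + 1, Q + W]`. Since `Q + 1` is short
with `opt Q = 1`, minimality forces `opt W = 1`, so `W` is a coin; but greedily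
`opt (Q + W) = 1 + opt (W - 1) ≤ 2`, so `W` itself violates the choice of `V`. -/

def IsCoin (a : ℕ → ℕ) (k : ℕ) (x : ℕ) : Prop :=
  ∃ j ≤ k, a j = x

def IsShort (a : ℕ → ℕ) (k : ℕ) (x : ℕ) : Prop :=
  IsCoin a k x ∧ 2 ≤ x ∧ opt a k (x - 1) + 1 < a 1

lemma exists_lex_min {P : ℕ → Prop} (f : ℕ → ℕ) (h : ∃ x, P x) :
    ∃ v, P v ∧ ∀ z, P z → f v < f z ∨ f v = f z ∧ v ≤ z := by
  obtain ⟨v, hv, hmin⟩ :=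
    (InvImage.wf (fun x => toLex (f x, x)) wellFounded_lt).has_min {x | P x} h
  refine ⟨v, hv, fun z hz => ?_⟩
  have := hmin z hz
  simp only [InvImage, Prod.Lex.toLex_lt_toLex, not_or, not_and, not_lt] at this
  omega

section

variable {a : ℕ → ℕ} {k : ℕ}

lemma IsCurrency.apply_le_apply (hcur : IsCurrency a k) {i j : ℕ} (hij : i ≤ j) (hj : j ≤ k) :
    a i ≤ a j := by
  rcases hij.eq_or_lt with rfl | h
  · rfl
  · exact (hcur.2 i j h hj).le

lemma IsCurrency.isCoin_one (hcur : IsCurrency a k) : IsCoin a k 1 :=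
  ⟨0, Nat.zero_le _, hcur.1⟩

lemma IsCurrency.one_le_of_isCoin (hcur : IsCurrency a k) {x : ℕ} (hx : IsCoin a k x) : 1 ≤ x := by
  obtain ⟨j, hj, rfl⟩ := hx
  exact hcur.1 ▸ hcur.apply_le_apply (Nat.zero_le j) hj

lemma IsCurrency.le_apply_top_of_isCoin (hcur : IsCurrency a k) {x : ℕ} (hx : IsCoin a k x) :
    x ≤ a k := by
  obtain ⟨j, hj, rfl⟩ := hx
  exact hcur.apply_le_apply hj le_rfl

lemma IsCurrency.one_le_and_apply_one_le (hcur : IsCurrency a k) {x : ℕ} (hx : IsCoin a k x)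
    (h2 : 2 ≤ x) : 1 ≤ k ∧ a 1 ≤ x := by
  obtain ⟨j, hj, rfl⟩ := hx
  have hj1 : 1 ≤ j := Nat.pos_of_ne_zero fun h => by rw [h, hcur.1] at h2; omega
  exact ⟨hj1.trans hj, hcur.apply_le_apply hj1 hj⟩

lemma opt_le_sum (c : ℕ) (x : Fin (k + 1) → ℕ) (hx : ∑ i, x i * a i = c) :
    opt a k c ≤ ∑ i, x i :=
  Nat.sInf_le ⟨x, rfl, hx⟩

lemma opt_zero : opt a k 0 = 0 :=
  Nat.le_zero.1 <| by simpa using opt_le_sum (a := a) 0 (fun _ => 0) (by simp)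

lemma IsCurrency.exists_opt_eq (hcur : IsCurrency a k) (c : ℕ) :
    ∃ x : Fin (k + 1) → ℕ, ∑ i, x i = opt a k c ∧ ∑ i, x i * a i = c := by
  refine Nat.sInf_mem (s := {n | ∃ x : Fin (k + 1) → ℕ, ∑ i, x i = n ∧ ∑ i, x i * a i = c})
    ⟨c, Pi.single 0 c, by simp, ?_⟩
  rw [Finset.sum_eq_single 0 (fun i _ hi => by simp [hi]) (by simp)]
  simp [hcur.1]

lemma IsCurrency.opt_pos (hcur : IsCurrency a k) {c : ℕ} (hc : 0 < c) : 0 < opt a k c := by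
  obtain ⟨x, hx, rfl⟩ := hcur.exists_opt_eq c
  refine Nat.pos_of_ne_zero fun h => hc.ne' ?_
  rw [h, Finset.sum_eq_zero_iff] at hx
  exact Finset.sum_eq_zero fun i hi => by rw [hx i hi, zero_mul]

lemma IsCurrency.opt_add_le (hcur : IsCurrency a k) (b c : ℕ) :
    opt a k (b + c) ≤ opt a k b + opt a k c := by
  obtain ⟨x, hx, hxb⟩ := hcur.exists_opt_eq b
  obtain ⟨y, hy, hyc⟩ := hcur.exists_opt_eq c
  rw [← hx, ← hy, ← Finset.sum_add_distrib]
  exact opt_le_sum _ _ (by simp only [add_mul, Finset.sum_add_distrib, hxb, hyc])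

lemma IsCurrency.opt_eq_one_iff (hcur : IsCurrency a k) {c : ℕ} :
    opt a k c = 1 ↔ IsCoin a k c := by
  constructor
  · intro h
    obtain ⟨x, hx, rfl⟩ := hcur.exists_opt_eq c
    rw [h] at hx
    obtain ⟨j, -, hj⟩ := Finset.exists_ne_zero_of_sum_ne_zero (hx ▸ one_ne_zero)
    have hsplit := Finset.add_sum_erase Finset.univ x (Finset.mem_univ j)
    have hrest : ∀ i ∈ Finset.univ.erase j, x i = 0 := Finset.sum_eq_zero_iff.1 (by omega)
    have hxj : x j = 1 := by omega
    refine ⟨j, j.is_le, ?_⟩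
    rw [Finset.sum_eq_single j (fun i _ hi => by
      rw [hrest i (Finset.mem_erase.2 ⟨hi, Finset.mem_univ i⟩), zero_mul]) (by simp), hxj, one_mul]
  · rintro ⟨j, hj, rfl⟩
    have hle : opt a k (a j) ≤ 1 := by
      simpa using opt_le_sum (a := a) (a j) (Pi.single ⟨j, by omega⟩ 1)
        (by rw [Finset.sum_eq_single ⟨j, by omega⟩ (fun i _ hi => by simp [hi]) (by simp)]; simp)
    have := hcur.opt_pos (hcur.one_le_of_isCoin ⟨j, hj, rfl⟩)
    omega

lemma bestCoin_le (c : ℕ) : bestCoin a k c ≤ c :=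
  Finset.sup_le fun _ hj => (Finset.mem_filter.1 hj).2

lemma le_bestCoin {x c : ℕ} (hx : IsCoin a k x) (hxc : x ≤ c) : x ≤ bestCoin a k c := by
  obtain ⟨j, hj, rfl⟩ := hx
  exact Finset.le_sup (Finset.mem_filter.2 ⟨Finset.mem_range.2 (by omega), hxc⟩)

lemma bestCoin_eq {b c : ℕ} (hb : IsCoin a k b) (hbc : b ≤ c)
    (hmax : ∀ u, IsCoin a k u → u ≤ c → u ≤ b) : bestCoin a k c = b := by
  refine le_antisymm (Finset.sup_le fun j hj => ?_) (le_bestCoin hb hbc)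
  obtain ⟨hjk, hjc⟩ := Finset.mem_filter.1 hj
  exact hmax (a j) ⟨j, Nat.lt_succ_iff.1 (Finset.mem_range.1 hjk), rfl⟩ hjc

lemma IsCurrency.isCoin_bestCoin (hcur : IsCurrency a k) {c : ℕ} (hc : 0 < c) :
    IsCoin a k (bestCoin a k c) := by
  have hne : ((Finset.range (k + 1)).filter fun j => a j ≤ c).Nonempty :=
    ⟨0, Finset.mem_filter.2 ⟨Finset.mem_range.2 k.succ_pos, hcur.1 ▸ hc⟩⟩
  obtain ⟨j, hj, hje⟩ := Finset.exists_mem_eq_sup _ hne a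
  exact ⟨j, Nat.lt_succ_iff.1 (Finset.mem_range.1 (Finset.mem_filter.1 hj).1), hje.symm⟩

lemma IsCurrency.bestCoin_succ (hcur : IsCurrency a k) {c : ℕ} (hc : 0 < c)
    (hc1 : ¬IsCoin a k (c + 1)) : bestCoin a k (c + 1) = bestCoin a k c := by
  refine bestCoin_eq (hcur.isCoin_bestCoin hc) ((bestCoin_le c).trans c.le_succ) fun u hu hle => ?_
  rcases hle.eq_or_lt with rfl | hlt
  · exact absurd hu hc1
  · exact le_bestCoin hu (Nat.lt_succ_iff.1 hlt)

lemma IsCurrency.grd_of_pos (hcur : IsCurrency a k) {c : ℕ} (hc : 0 < c) :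
    grd a k c = grd a k (c - bestCoin a k c) + 1 := by
  obtain ⟨n, rfl⟩ := Nat.exists_eq_succ_of_ne_zero hc.ne'
  rw [grd, dif_pos (le_bestCoin hcur.isCoin_one hc)]

lemma IsCurrency.grd_of_lt (hcur : IsCurrency a k) {c : ℕ} (hc : c < a 1) : grd a k c = c := by
  induction c using Nat.strong_induction_on with
  | _ c ih =>
    rcases Nat.eq_zero_or_pos c with rfl | hpos
    · rw [grd]
    · have hbest : bestCoin a k c = 1 := bestCoin_eq hcur.isCoin_one hpos fun u hu huc => by
        by_contra h
        have := (hcur.one_le_and_apply_one_le hu (by omega)).2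
        omega
      rw [hcur.grd_of_pos hpos, hbest, ih (c - 1) (by omega) (by omega)]
      omega

lemma Orderly.opt_of_lt (hord : Orderly a k) (hcur : IsCurrency a k) {c : ℕ} (hc : c < a 1) :
    opt a k c = c := by
  rcases Nat.eq_zero_or_pos c with rfl | hpos
  · exact opt_zero
  · rw [hord c hpos, hcur.grd_of_lt hc]

lemma Orderly.opt_of_pos (hord : Orderly a k) (hcur : IsCurrency a k) {c : ℕ} (hc : 0 < c) :
    opt a k c = opt a k (c - bestCoin a k c) + 1 := by
  rw [hord c hc, hcur.grd_of_pos hc]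
  rcases Nat.eq_zero_or_pos (c - bestCoin a k c) with h | h
  · rw [h, opt_zero, grd]
  · rw [hord _ h]

lemma Orderly.opt_apply_sub_one (hord : Orderly a k) (hcur : IsCurrency a k) {i : ℕ}
    (hi : 1 ≤ i) (hik : i ≤ k) (hgap : a i - a (i - 1) ≤ a 1) :
    opt a k (a i - 1) = a i - a (i - 1) := by
  have hlt : a (i - 1) < a i := hcur.2 _ _ (by omega) hik
  have hpos := hcur.one_le_of_isCoin ⟨i - 1, by omega, rfl⟩
  have hbest : bestCoin a k (a i - 1) = a (i - 1) :=
    bestCoin_eq ⟨i - 1, by omega, rfl⟩ (by omega) fun u ⟨j, hj, hju⟩ hu => by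
      subst hju
      rcases le_or_gt j (i - 1) with h | h
      · exact hcur.apply_le_apply h (by omega)
      · have := hcur.apply_le_apply (show i ≤ j by omega) hj
        omega
  rw [hord.opt_of_pos hcur (by omega), hbest, hord.opt_of_lt hcur (by omega)]
  omega

end

section MinimalShortCoin

variable {a : ℕ → ℕ} {k W : ℕ}

lemma Orderly.isCoin_add_or_isCoin_add_succ (hord : Orderly a k) (hcur : IsCurrency a k)
    (hV : IsCoin a k (W + 1))
    (hbelow : ∀ z, IsCoin a k z → 2 ≤ z → z ≤ W → opt a k W < opt a k (z - 1))
    {x w : ℕ} (hx : IsCoin a k x) (hw : IsCoin a k w) (hxw : x < w) (hwW : w ≤ x + W) :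
    IsCoin a k (x + W) ∨ IsCoin a k (x + W + 1) := by
  have hpos : 0 < x + W := by omega
  have hxb : x < bestCoin a k (x + W) := hxw.trans_le (le_bestCoin hw hwW)
  rcases (bestCoin_le (x + W)).eq_or_lt with hbeq | hblt
  · exact .inl (hbeq ▸ hcur.isCoin_bestCoin hpos)
  refine or_iff_not_imp_right.2 fun hnot => ?_
  have hx1 := hcur.opt_eq_one_iff.2 hx
  have hrem : opt a k (x + W - bestCoin a k (x + W)) ≤ opt a k W := by
    have := hcur.opt_add_le x W
    rw [hx1, hord.opt_of_pos hcur hpos] at this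
    omega
  -- `x + (W + 1)` is a sum of two coins, and its greedy coin is that of `x + W`
  have hrem_succ : opt a k (x + W - bestCoin a k (x + W) + 1) ≤ 1 := by
    have := hcur.opt_add_le x (W + 1)
    rw [hx1, hcur.opt_eq_one_iff.2 hV, ← add_assoc, hord.opt_of_pos hcur (by omega),
      hcur.bestCoin_succ hpos hnot, show x + W + 1 - bestCoin a k (x + W)
        = x + W - bestCoin a k (x + W) + 1 by omega] at this
    omega
  have hz := hcur.opt_eq_one_iff.1 (le_antisymm hrem_succ (hcur.opt_pos (by omega)))
  have := hbelow _ hz (by omega) (by omega)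
  rw [Nat.add_sub_cancel] at this
  omega

lemma Orderly.exists_isCoin_gap (hord : Orderly a k) (hcur : IsCurrency a k)
    (hV : IsCoin a k (W + 1))
    (hbelow : ∀ z, IsCoin a k z → 2 ≤ z → z ≤ W → opt a k W < opt a k (z - 1))
    (ha1 : IsCoin a k (a 1)) (h1 : 1 < a 1) (ha1W : a 1 ≤ W) :
    ∃ Q, IsCoin a k Q ∧ IsCoin a k (Q + 1) ∧ ∀ u, IsCoin a k u → u ≤ Q + W → u ≤ Q + 1 := by
  classical
  set S := {x | IsCoin a k x ∧ ∃ w, IsCoin a k w ∧ x < w ∧ w < x + W}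
  have hS1 : 1 ∈ S := ⟨hcur.isCoin_one, a 1, ha1, h1, by omega⟩
  have hbdd : BddAbove S := ⟨a k, fun x hx => hcur.le_apply_top_of_isCoin hx.1⟩
  obtain ⟨hQ, w, hw, hQw, hwQ⟩ : sSup S ∈ S := Nat.sSup_mem ⟨1, hS1⟩ hbdd
  set Q := sSup S
  have hR : ∃ u, IsCoin a k u ∧ Q < u := ⟨w, hw, hQw⟩
  obtain ⟨hRcoin, hQR⟩ := Nat.find_spec hR
  have hRw : Nat.find hR ≤ w := Nat.find_min' hR ⟨hw, hQw⟩
  set R := Nat.find hR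
  have hRgap : ∀ u, IsCoin a k u → R < u → R + W ≤ u := fun u hu hRu => by
    by_contra h
    have := le_csSup hbdd ⟨hRcoin, u, hu, hRu, by omega⟩
    omega
  obtain ⟨A, hA, hQWA, hAQW⟩ : ∃ A, IsCoin a k A ∧ Q + W ≤ A ∧ A ≤ Q + W + 1 := by
    rcases hord.isCoin_add_or_isCoin_add_succ hcur hV hbelow hQ hw hQw hwQ.le with h | h
    exacts [⟨_, h, le_rfl, by omega⟩, ⟨_, h, by omega, le_rfl⟩]
  have hRQ : R = Q + 1 := by
    have := hRgap A hA (by omega)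
    omega
  refine ⟨Q, hQ, hRQ ▸ hRcoin, fun u hu huQ => ?_⟩
  by_contra h
  have := hRgap u hu (by omega)
  omega

theorem Orderly.not_isShort (hord : Orderly a k) (hcur : IsCurrency a k) (x : ℕ) :
    ¬IsShort a k x := by
  intro hx
  obtain ⟨V, ⟨hV, hV2, hVopt⟩, hVmin⟩ := exists_lex_min (fun z => opt a k (z - 1)) ⟨x, hx⟩
  obtain ⟨W, rfl⟩ : ∃ W, V = W + 1 := ⟨V - 1, by omega⟩
  simp only [Nat.add_sub_cancel] at hVopt hVmin
  have hbelow : ∀ z, IsCoin a k z → 2 ≤ z → z ≤ W → opt a k W < opt a k (z - 1) := by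
    intro z hz hz2 hzW
    by_contra! hle
    rcases hVmin z ⟨hz, hz2, by omega⟩ with h | h <;> omega
  obtain ⟨hk, ha1V⟩ := hcur.one_le_and_apply_one_le hV hV2
  have hW1 := hcur.opt_pos (show 0 < W by omega)
  have ha1W : a 1 ≤ W := by
    by_contra h
    have : opt a k W = W := hord.opt_of_lt hcur (by omega)
    omega
  obtain ⟨Q, hQ, hQ1, hgap⟩ :=
    hord.exists_isCoin_gap hcur hV hbelow ⟨1, hk, rfl⟩ (by omega) ha1W
  have hQopt := hcur.opt_eq_one_iff.2 hQ
  have hW : opt a k W = 1 := by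
    have := hcur.one_le_of_isCoin hQ
    rcases hVmin (Q + 1) ⟨hQ1, by omega, by simp only [Nat.add_sub_cancel, hQopt]; omega⟩ with
      h | h <;> simp only [Nat.add_sub_cancel, hQopt] at h <;> omega
  have hgreedy : opt a k (Q + W) = opt a k (W - 1) + 1 := by
    rw [hord.opt_of_pos hcur (by omega), bestCoin_eq hQ1 (by omega) hgap]
    congr 2
    omega
  have := hcur.opt_add_le Q W
  have := hbelow W (hcur.opt_eq_one_iff.1 hW) (by omega) le_rfl
  omega

end MinimalShortCoin

/-- If `(1, a 1, …, a k)` is orderly then consecutive coins differ by at least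
`a 1 - 1`. -/
theorem gap_ge (a : ℕ → ℕ) (k : ℕ)
    (hcur : IsCurrency a k) (hord : Orderly a k) :
    ∀ i : ℕ, 1 ≤ i → i ≤ k → a 1 - 1 ≤ a i - a (i - 1) := by
  intro i hi hik
  by_contra! hlt
  have hstep : a (i - 1) < a i := hcur.2 _ _ (by omega) hik
  have := hcur.one_le_of_isCoin ⟨i - 1, by omega, rfl⟩
  refine hord.not_isShort hcur (a i) ⟨⟨i, hik, rfl⟩, by omega, ?_⟩
  rw [hord.opt_apply_sub_one hcur hi hik (by omega)]
  omega
end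

section
/- Let A = (1, a_1, …, a_k) be an orderly currency. If indices 0 ≤ i < j ≤ k and 0 ≤ l < m ≤ k satisfy a_m − a_{l+1} < a_j − a_i < a_m − a_l, then j < k and a_{j+1} ≤ a_i + a_m. -/
/-!
The amount `c = a i + a m` is paid with two coins. If the conclusion failed, no coin would lie
in `(a j, c]`, so the greedy algorithm would first take `a j`; the remainder `c - a j` lies strictly
between the consecutive coins `a l` and `a (l + 1)`, hence is not a coin and costs the greedy
algorithm at least two more coins. So `grd c ≥ 3 > 2 ≥ opt c`, contradicting orderliness.
-/

section Coins

variable {a : ℕ → ℕ} {k : ℕ}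

lemma IsCurrency.le_of_le (hcur : IsCurrency a k) {s t : ℕ} (hst : s ≤ t) (htk : t ≤ k) :
    a s ≤ a t := by
  rcases hst.eq_or_lt with rfl | hlt
  · exact le_rfl
  · exact (hcur.2 s t hlt htk).le

lemma IsCurrency.ne_of_lt_of_lt_succ (hcur : IsCurrency a k) {l r : ℕ} (hl : l < k)
    (hlr : a l < r) (hrl : r < a (l + 1)) {t : ℕ} (htk : t ≤ k) : a t ≠ r := by
  rcases le_or_gt t l with htl | hlt
  · have := hcur.le_of_le htl hl.le
    omega
  · have := hcur.le_of_le (show l + 1 ≤ t by omega) htk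
    omega

lemma le_bestCoin_s9 {s : ℕ} (c : ℕ) (hsk : s ≤ k) (hsc : a s ≤ c) : a s ≤ bestCoin a k c :=
  Finset.le_sup (Finset.mem_filter.mpr ⟨Finset.mem_range.mpr (Nat.lt_succ_of_le hsk), hsc⟩)

lemma exists_bestCoin_eq {c : ℕ} (hc : a 0 ≤ c) : ∃ t ≤ k, a t ≤ c ∧ bestCoin a k c = a t := by
  have hne : ((Finset.range (k + 1)).filter fun j => a j ≤ c).Nonempty :=
    ⟨0, Finset.mem_filter.mpr ⟨Finset.mem_range.mpr k.succ_pos, hc⟩⟩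
  obtain ⟨t, ht, heq⟩ := Finset.exists_mem_eq_sup _ hne a
  rw [Finset.mem_filter, Finset.mem_range] at ht
  exact ⟨t, Nat.le_of_lt_succ ht.1, ht.2, heq⟩

lemma IsCurrency.bestCoin_eq (hcur : IsCurrency a k) {j c : ℕ} (hjk : j ≤ k) (hjc : a j ≤ c)
    (hc : j < k → c < a (j + 1)) : bestCoin a k c = a j := by
  refine le_antisymm (Finset.sup_le fun t ht => ?_) (le_bestCoin_s9 c hjk hjc)
  rw [Finset.mem_filter, Finset.mem_range] at ht
  rcases le_or_gt t j with htj | hjt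
  · exact hcur.le_of_le htj hjk
  · have := hcur.le_of_le (show j + 1 ≤ t by omega) (Nat.le_of_lt_succ ht.1)
    have := hc (by omega)
    omega

lemma grd_eq_grd_sub_bestCoin_add_one {c : ℕ} (hc : 0 < c) (hb : 1 ≤ bestCoin a k c) :
    grd a k c = grd a k (c - bestCoin a k c) + 1 := by
  obtain ⟨c, rfl⟩ := Nat.exists_eq_add_one_of_ne_zero hc.ne'
  rw [grd, dif_pos hb]

lemma one_le_bestCoin (h0 : a 0 = 1) {c : ℕ} (hc : 0 < c) : 1 ≤ bestCoin a k c :=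
  h0 ▸ le_bestCoin_s9 c k.zero_le (h0 ▸ hc)

lemma two_le_grd_of_ne_coin (h0 : a 0 = 1) {c : ℕ} (hc : 0 < c) (hne : ∀ t ≤ k, a t ≠ c) :
    2 ≤ grd a k c := by
  obtain ⟨t, htk, htc, hbt⟩ := exists_bestCoin_eq (k := k) (show a 0 ≤ c by omega)
  have hlt : a t < c := lt_of_le_of_ne htc (hne t htk)
  have hb := one_le_bestCoin (k := k) h0 hc
  have hrest := one_le_bestCoin (k := k) h0 (show 0 < c - bestCoin a k c by omega)
  rw [grd_eq_grd_sub_bestCoin_add_one hc hb,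
    grd_eq_grd_sub_bestCoin_add_one (by omega) hrest]
  omega

lemma opt_coin_add_coin_le_two {i m : ℕ} (hik : i ≤ k) (hmk : m ≤ k) : opt a k (a i + a m) ≤ 2 := by
  apply Nat.sInf_le
  refine ⟨fun f => (if f = (⟨i, by omega⟩ : Fin (k + 1)) then 1 else 0) +
    (if f = (⟨m, by omega⟩ : Fin (k + 1)) then 1 else 0), ?_, ?_⟩
  · simp [Finset.sum_add_distrib, Finset.sum_ite_eq']
  · simp [add_mul, ite_mul, Finset.sum_add_distrib, Finset.sum_ite_eq']

end Coins

/-- If `(1, a 1, …, a k)` is orderly and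
`a m - a (l+1) < a j - a i < a m - a l` with `i < j ≤ k` and `l < m ≤ k`, then
`j < k` and `a (j+1) ≤ a i + a m`. -/
theorem aux_between_gaps (a : ℕ → ℕ) (k : ℕ)
    (hcur : IsCurrency a k) (hord : Orderly a k)
    (i j l m : ℕ) (hij : i < j) (hjk : j ≤ k) (hlm : l < m) (hmk : m ≤ k)
    (h1 : a m - a (l + 1) < a j - a i) (h2 : a j - a i < a m - a l) :
    j < k ∧ a (j + 1) ≤ a i + a m := by
  have hai : a i < a j := hcur.2 i j hij hjk
  have hal : a l < a (l + 1) := hcur.2 l (l + 1) l.lt_succ_self (by omega)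
  have ham : a (l + 1) ≤ a m := hcur.le_of_le hlm hmk
  by_contra! hcon
  have hbest : bestCoin a k (a i + a m) = a j := hcur.bestCoin_eq hjk (by omega) hcon
  have hlow : a l < a i + a m - a j := by omega
  have hhigh : a i + a m - a j < a (l + 1) := by omega
  have hrest : 2 ≤ grd a k (a i + a m - a j) :=
    two_le_grd_of_ne_coin hcur.1 (by omega) fun _ htk =>
      hcur.ne_of_lt_of_lt_succ (by omega) hlow hhigh htk
  have hgrd : grd a k (a i + a m) = grd a k (a i + a m - a j) + 1 :=
    hbest ▸ grd_eq_grd_sub_bestCoin_add_one (by omega) (one_le_bestCoin hcur.1 (by omega))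
  have hopt : opt a k (a i + a m) = grd a k (a i + a m) := hord _ (by omega)
  have htwo := opt_coin_add_coin_le_two (a := a) (hij.le.trans hjk) hmk
  omega
end
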